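/- Let v, w be two vertices of a staged tree in the same stage with children v₀,…,v_k and w₀,…,w_k matched so that θ(v,v_i) = θ(w,w_i). If v and w are in the same position, i.e. t(v) = t(w), and the tree is stratified, then t(v_i) = t(w_i) for all i ∈ {0,…,k}. -/

import Mathlib

open MvPolynomial

inductive STree (L : Type) where
  | leaf : STree L
  | node : List (L × STree L) → STree L

namespace STree

variable {L : Type}

def children : STree L → List (L × STree L)
  | .leaf => []
  | .node cs => cs

def paths : STree L → List (List L)
  | .leaf => [[]]
  | .node cs => cs.attach.flatMap (fun x => (paths x.1.2).map (fun p => x.1.1 :: p))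
termination_by t => sizeOf t
decreasing_by
  have h := List.sizeOf_lt_of_mem x.2
  obtain ⟨⟨l, c⟩, hm⟩ := x
  simp only [Prod.mk.sizeOf_spec] at h
  simp only [STree.node.sizeOf_spec]
  omega

noncomputable def tpoly (T : STree L) : MvPolynomial L ℝ :=
  ((paths T).map (fun p => (p.map X).prod)).sum

def outLabels (T : STree L) : List L := T.children.map Prod.fst

def SameStage (v w : STree L) : Prop := ∀ l, l ∈ v.outLabels ↔ l ∈ w.outLabels

inductive OccursAt : STree L → ℕ → STree L → Prop where
  | refl (T : STree L) : OccursAt T 0 T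
  | child {cs : List (L × STree L)} {l : L} {c v : STree L} {n : ℕ} :
      (l, c) ∈ cs → OccursAt c n v → OccursAt (.node cs) (n + 1) v

def IsStagedTree (T : STree L) : Prop :=
  (∀ n cs, OccursAt T n (.node cs) → cs ≠ [] ∧ (cs.map Prod.fst).Nodup) ∧
  (∀ n m v w, OccursAt T n v → OccursAt T m w →
    (SameStage v w ∨ ∀ l, ¬(l ∈ v.outLabels ∧ l ∈ w.outLabels)))

def Star (v w : STree L) : Prop :=
  ∀ l l' c c' d d', l ≠ l' →
    (l, c) ∈ v.children → (l', c') ∈ v.children →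
    (l, d) ∈ w.children → (l', d') ∈ w.children →
    tpoly c * tpoly d' = tpoly d * tpoly c'

def Balanced (T : STree L) : Prop :=
  ∀ n m v w, OccursAt T n v → OccursAt T m w → SameStage v w → Star v w

def Stratified (T : STree L) : Prop :=
  (∀ n m, OccursAt T n .leaf → OccursAt T m .leaf → n = m) ∧
  (∀ n m v w, OccursAt T n v → OccursAt T m w → SameStage v w → n = m)

end STree

/-!
Substitute `1` for the label `l` and `0` for the other labels of the common stage of `v` and `w`,
leaving all other labels alone. Since the tree is stratified, the labels of that stage occur at
no level below `v` and `w`, so the substitution fixes the polynomial of every child, and by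
`t(v) = ∑ᵢ θ(v, vᵢ) t(vᵢ)` it sends `t(v)` to `t(c)` and `t(w)` to `t(d)`. Hence `t(v) = t(w)`
forces `t(c) = t(d)`.
-/

lemma List.sum_map_ite_fst_eq {α β M : Type*} [AddCommMonoid M] [DecidableEq α]
    {cs : List (α × β)} {a : α} {b : β} (f : β → M)
    (hnd : (cs.map Prod.fst).Nodup) (hab : (a, b) ∈ cs) :
    (cs.map fun y => if y.1 = a then f y.2 else 0).sum = f b := by
  induction cs with
  | nil => simp at hab
  | cons y cs ih =>
    rw [List.map_cons, List.nodup_cons] at hnd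
    rw [List.map_cons, List.sum_cons]
    rcases List.mem_cons.mp hab with rfl | hab
    · have hrest : ∀ z ∈ cs, z.1 ≠ a := fun z hz h =>
        hnd.1 (by simpa [h] using List.mem_map_of_mem (f := Prod.fst) hz)
      simp [List.map_congr_left fun z hz => if_neg (hrest z hz)]
    · have hy : y.1 ≠ a := fun h => hnd.1 (h ▸ List.mem_map_of_mem hab)
      rw [if_neg hy, zero_add, ih hnd.2 hab]

namespace STree

variable {L : Type}

lemma OccursAt.trans {a b c : STree L} {n m : ℕ} (hab : OccursAt a n b) (hbc : OccursAt b m c) :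
    OccursAt a (n + m) c := by
  induction hab with
  | refl => simpa using hbc
  | child hmem _ ih => simpa only [Nat.add_right_comm] using OccursAt.child hmem (ih hbc)

lemma OccursAt.of_mem_children {cs : List (L × STree L)} {l : L} {c : STree L}
    (h : (l, c) ∈ cs) : OccursAt (.node cs) 1 c :=
  .child h (.refl c)

def HasLabel (u : STree L) (x : L) : Prop :=
  ∃ m u', OccursAt u m u' ∧ x ∈ u'.outLabels

lemma tpoly_leaf : tpoly (.leaf : STree L) = 1 := by
  simp [tpoly, paths]

lemma tpoly_node (cs : List (L × STree L)) :
    tpoly (.node cs) = (cs.map fun y => X y.1 * tpoly y.2).sum := by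
  rw [tpoly, paths, List.map_flatMap, List.flatMap_def, List.sum_flatten, List.map_map]
  conv_rhs => rw [← List.attach_map_subtype_val cs, List.map_map]
  congr 1
  refine List.map_congr_left fun y _ => ?_
  simp [tpoly, Function.comp_def, ← List.sum_map_mul_left]

theorem aeval_tpoly_eq_self (f : L → MvPolynomial L ℝ) :
    ∀ u : STree L, (∀ x, u.HasLabel x → f x = X x) → aeval f (tpoly u) = tpoly u
  | .leaf, _ => by simp [tpoly_leaf]
  | .node cs, hf => by
    rw [tpoly_node, map_list_sum, List.map_map]
    congr 1
    refine List.map_congr_left fun ⟨l, c⟩ hmem => ?_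
    have hl : f l = X l := hf l ⟨0, _, .refl _, List.mem_map_of_mem (f := Prod.fst) hmem⟩
    have hc : aeval f (tpoly c) = tpoly c :=
      aeval_tpoly_eq_self f c fun x ⟨m, u, hu, hx⟩ => hf x ⟨m + 1, u, .child hmem hu, hx⟩
    simp only [Function.comp, map_mul, aeval_X, hl, hc]
termination_by u => sizeOf u
decreasing_by
  have h := List.sizeOf_lt_of_mem hmem
  simp only [Prod.mk.sizeOf_spec] at h
  simp only [STree.node.sizeOf_spec]
  omega

open scoped Classical in
noncomputable def selectLabel (S : Set L) (l : L) (x : L) : MvPolynomial L ℝ :=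
  if x = l then 1 else if x ∈ S then 0 else X x

theorem aeval_selectLabel_tpoly_node {cs : List (L × STree L)} {S : Set L} {l : L}
    {c : STree L} (hnd : (cs.map Prod.fst).Nodup) (hc : (l, c) ∈ cs)
    (hlabels : ∀ y ∈ cs, y.1 ∈ S) (hbelow : ∀ y ∈ cs, ∀ x, y.2.HasLabel x → x ∉ S) :
    aeval (selectLabel S l) (tpoly (.node cs)) = tpoly c := by
  classical
  have hl : l ∈ S := hlabels _ hc
  rw [tpoly_node, map_list_sum, List.map_map, ← List.sum_map_ite_fst_eq tpoly hnd hc]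
  congr 1
  refine List.map_congr_left fun y hy => ?_
  have hfix : aeval (selectLabel S l) (tpoly y.2) = tpoly y.2 :=
    aeval_tpoly_eq_self _ y.2 fun x hx => by
      have hxS := hbelow y hy x hx
      simp [selectLabel, hxS, show x ≠ l from fun h => hxS (h ▸ hl)]
  simp only [Function.comp, map_mul, aeval_X, hfix]
  by_cases hyl : y.1 = l <;> simp [selectLabel, hyl, hlabels y hy]

theorem notMem_outLabels_of_lt {T u v : STree L} {n m : ℕ} {x : L} (hst : IsStagedTree T)
    (hS : Stratified T) (hv : OccursAt T n v) (hu : OccursAt T m u) (hnm : n < m)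
    (hx : x ∈ u.outLabels) : x ∉ v.outLabels := fun hxv => by
  rcases hst.2 n m v u hv hu with hsame | hdisj
  · exact hnm.ne (hS.2 n m v u hv hu hsame)
  · exact hdisj x ⟨hxv, hx⟩

end STree

open STree in
theorem stmt12 {L : Type} (T : STree L) (hst : IsStagedTree T) (hS : Stratified T)
    {n n' : ℕ} {v w : STree L} (hv : OccursAt T n v) (hw : OccursAt T n' w)
    (hss : SameStage v w) (hpos : tpoly v = tpoly w) :
    ∀ l c d, (l, c) ∈ v.children → (l, d) ∈ w.children → tpoly c = tpoly d := by
  intro l c d hc hd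
  obtain ⟨cs, rfl⟩ : ∃ cs, v = .node cs := by cases v <;> simp_all [children]
  obtain ⟨ds, rfl⟩ : ∃ ds, w = .node ds := by cases w <;> simp_all [children]
  have hn : n' = n := (hS.2 n n' _ _ hv hw hss).symm
  rw [hn] at hw
  let S : Set L := {x | x ∈ (node cs).outLabels}
  have hbelow : ∀ (es : List (L × STree L)), OccursAt T n (.node es) →
      ∀ y ∈ es, ∀ x, y.2.HasLabel x → x ∉ S := by
    rintro es hes y hy x ⟨m, u', hu', hx⟩
    refine notMem_outLabels_of_lt hst hS hv ((hes.trans (.of_mem_children hy)).trans hu') ?_ hx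
    omega
  have hlabel : ∀ y ∈ ds, y.1 ∈ S := fun y hy =>
    (hss y.1).mpr (List.mem_map_of_mem (f := Prod.fst) hy)
  calc tpoly c = aeval (selectLabel S l) (tpoly (.node cs)) :=
        (aeval_selectLabel_tpoly_node (hst.1 n cs hv).2 hc
          (fun y hy => List.mem_map_of_mem (f := Prod.fst) hy) (hbelow cs hv)).symm
    _ = aeval (selectLabel S l) (tpoly (.node ds)) := by rw [hpos]
    _ = tpoly d := aeval_selectLabel_tpoly_node (hst.1 n ds hw).2 hd hlabel (hbelow ds hw)
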